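/- Let f : [0,1] → ℝ be continuously differentiable and nonincreasing with f(0) = 1 and f(1) ≥ 0, and let α(t) = 1 - e^(t-1). Then -∫₀¹ α(t)·f'(t) dt + ∫₀¹ (1 - α(t))·f(t) dt ≥ 1 - 1/e. -/

import Mathlib

/-!
Integrating by parts, `-∫ α f' = α(0) f(0) - α(1) f(1) + ∫ α' f`, and the ODE `α' = α - 1` turns
the last integral into `-∫ (1 - α) f`, cancelling the second term. Hence the sum equals
`α(0) f(0) - α(1) f(1) = 1 - 1/e`, since `α(1) = 0`.
-/

open Set intervalIntegral

theorem neg_integral_mul_deriv_add_integral_one_sub_mul_eq {α f f' : ℝ → ℝ} {a b : ℝ}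
    (hα : ∀ t ∈ uIcc a b, HasDerivAt α (α t - 1) t)
    (hf : ∀ t ∈ uIcc a b, HasDerivAt f (f' t) t)
    (hf' : IntervalIntegrable f' MeasureTheory.volume a b) :
    (-∫ t in a..b, α t * f' t) + ∫ t in a..b, (1 - α t) * f t = α a * f a - α b * f b := by
  have hα_cont : ContinuousOn (fun t => α t - 1) (uIcc a b) := fun t ht =>
    ((hα t ht).continuousAt.sub continuousAt_const).continuousWithinAt
  have hparts := integral_mul_deriv_eq_deriv_mul hα hf hα_cont.intervalIntegrable hf'
  have hneg : (∫ t in a..b, (α t - 1) * f t) = -∫ t in a..b, (1 - α t) * f t := by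
    rw [← integral_neg]
    congr 1 with t
    ring
  rw [hparts, hneg]
  ring

theorem hasDerivAt_one_sub_exp_sub_one (t : ℝ) :
    HasDerivAt (fun s => 1 - Real.exp (s - 1)) ((1 - Real.exp (t - 1)) - 1) t := by
  simpa using ((hasDerivAt_id t).sub_const 1).exp.const_sub 1

theorem normalized_residual_bound_general (f f' : ℝ → ℝ)
    (hderiv : ∀ t ∈ Set.Icc (0:ℝ) 1, HasDerivAt f (f' t) t)
    (hcont : ContinuousOn f' (Set.Icc (0:ℝ) 1))
    (hf0 : f 0 = 1)
    (α : ℝ → ℝ) (hα : α = fun t => 1 - Real.exp (t - 1)) :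
    (-∫ t in (0:ℝ)..1, α t * f' t) + (∫ t in (0:ℝ)..1, (1 - α t) * f t)
      ≥ 1 - 1 / Real.exp 1 := by
  subst hα
  have hIcc : uIcc (0:ℝ) 1 = Icc 0 1 := uIcc_of_le zero_le_one
  rw [neg_integral_mul_deriv_add_integral_one_sub_mul_eq
    (fun t _ => hasDerivAt_one_sub_exp_sub_one t) (hIcc ▸ hderiv)
    (hcont.intervalIntegrable_of_Icc zero_le_one)]
  simp [hf0, Real.exp_neg]

theorem normalized_residual_bound (f f' : ℝ → ℝ)
    (hderiv : ∀ t ∈ Set.Icc (0:ℝ) 1, HasDerivAt f (f' t) t)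
    (hcont : ContinuousOn f' (Set.Icc (0:ℝ) 1))
    (hmono : ∀ s ∈ Set.Icc (0:ℝ) 1, ∀ t ∈ Set.Icc (0:ℝ) 1, s ≤ t → f t ≤ f s)
    (hf0 : f 0 = 1) (hf1 : 0 ≤ f 1)
    (α : ℝ → ℝ) (hα : α = fun t => 1 - Real.exp (t - 1)) :
    (-∫ t in (0:ℝ)..1, α t * f' t) + (∫ t in (0:ℝ)..1, (1 - α t) * f t)
      ≥ 1 - 1 / Real.exp 1 :=
  normalized_residual_bound_general f f' hderiv hcont hf0 α hα
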